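/- Let A be a finite dimensional unital k-algebra and e ∈ A an idempotent such that eA ≅ Hom_k(Ae, k) as right A-modules. Then the A-A-bimodule Ae ⊗_k eA carries the structure of an algebra object in the monoidal category of A-A-bimodules, with multiplication induced by the pairing eA ⊗_A Ae → k (via the fixed isomorphism eA ≅ (Ae)* and evaluation) and unit A → Ae ⊗_k eA given by a dual basis element. -/

import Mathlib

/-!
Through `Φ`, the bimodule `Ae ⊗ eA` is `Ae ⊗ (Ae)^* ≅ End_k(Ae)`, and the multiplication
`(x ⊗ w)(y ⊗ z) = Φ(w)(y) • x ⊗ z` is composition of rank-one operators, so it is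
associative; the dual-basis element `Σᵢ aᵢ ⊗ Φ⁻¹(aᵢ*)` is the identity operator, hence a
two-sided unit. It is central because equivariance of `Φ` turns right multiplication by `a`
on `eA` into the transpose of left multiplication by `a` on `Ae`, and the identity commutes
with every operator. Multiplying the middle factors in `A` and evaluating at `e` recovers
the pairing `Φ(w)(y)` because `y * e = y` for `y ∈ Ae`.
-/

open TensorProduct

namespace Statement3

variable (k A : Type) [Field k] [Ring A] [Algebra k A] (e : A)

/-- The subspace `Ae ⊆ A` (all `a * e`). -/
noncomputable def Ae : Submodule k A := LinearMap.range (LinearMap.mulRight k e)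

/-- The subspace `eA ⊆ A` (all `e * a`). -/
noncomputable def eA : Submodule k A := LinearMap.range (LinearMap.mulLeft k e)

lemma mem_Ae (a : A) : a * e ∈ Ae k A e := ⟨a, rfl⟩

lemma e_mem_Ae : e ∈ Ae k A e := ⟨1, one_mul e⟩

lemma mem_eA (a : A) : e * a ∈ eA k A e := ⟨a, rfl⟩

lemma mem_eA' (b : A) : e * (b * e) ∈ eA k A e := ⟨b * e, rfl⟩

lemma mem_Ae' (a c : A) : a * (c * e) ∈ Ae k A e :=
  ⟨a * c, by rw [LinearMap.mulRight_apply, mul_assoc]⟩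

lemma mem_eA'' (b a : A) : (e * b) * a ∈ eA k A e :=
  ⟨b * a, by rw [LinearMap.mulLeft_apply, mul_assoc]⟩

lemma mem_eAe_mid (b c : A) : (e * b) * (c * e) ∈ eA k A e :=
  ⟨b * (c * e), by rw [LinearMap.mulLeft_apply, mul_assoc]⟩

section Contraction

variable {R Y W M : Type*} [CommRing R] [AddCommGroup Y] [Module R Y] [AddCommGroup W]
  [Module R W] [AddCommGroup M] [Module R M]

noncomputable def mulMid (μ : W →ₗ[R] Y →ₗ[R] M) :
    Y ⊗[R] W →ₗ[R] Y ⊗[R] W →ₗ[R] Y ⊗[R] (M ⊗[R] W) :=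
  curry <| LinearMap.lTensor Y (LinearMap.rTensor W (lift μ)) ∘ₗ
    LinearMap.lTensor Y (TensorProduct.assoc R W Y W).symm.toLinearMap ∘ₗ
    (TensorProduct.assoc R Y W (Y ⊗[R] W)).toLinearMap

@[simp]
lemma mulMid_tmul (μ : W →ₗ[R] Y →ₗ[R] M) (x : Y) (w : W) (y : Y) (z : W) :
    mulMid μ (x ⊗ₜ w) (y ⊗ₜ z) = x ⊗ₜ (μ w y ⊗ₜ z) := by
  simp [mulMid]

noncomputable def contractMid (p : W →ₗ[R] Y →ₗ[R] R) :
    Y ⊗[R] W →ₗ[R] Y ⊗[R] W →ₗ[R] Y ⊗[R] W :=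
  (mulMid p).compr₂ (LinearMap.lTensor Y (TensorProduct.lid R W).toLinearMap)

@[simp]
lemma contractMid_tmul (p : W →ₗ[R] Y →ₗ[R] R) (x : Y) (w : W) (y : Y) (z : W) :
    contractMid p (x ⊗ₜ w) (y ⊗ₜ z) = p w y • (x ⊗ₜ z) := by
  simp [contractMid, tmul_smul]

lemma contractMid_assoc (p : W →ₗ[R] Y →ₗ[R] R) (r s t : Y ⊗[R] W) :
    contractMid p (contractMid p r s) t = contractMid p r (contractMid p s t) := by
  induction r using TensorProduct.induction_on <;>
    induction s using TensorProduct.induction_on <;>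
    induction t using TensorProduct.induction_on <;>
    simp_all [smul_smul, mul_comm]

variable {ι : Type*} [Fintype ι] (Φ : W ≃ₗ[R] Module.Dual R Y) (B : Module.Basis ι R Y)

noncomputable def coev : Y ⊗[R] W := ∑ i, B i ⊗ₜ Φ.symm (B.coord i)

lemma contractMid_coev_left : contractMid Φ.toLinearMap (coev Φ B) = LinearMap.id :=
  TensorProduct.ext' fun x w => by
    rw [coev, map_sum, LinearMap.sum_apply]
    simp only [contractMid_tmul, LinearEquiv.coe_coe, LinearEquiv.apply_symm_apply,
      Module.Basis.coord_apply, smul_tmul']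
    rw [← sum_tmul, B.sum_repr, LinearMap.id_apply]

lemma contractMid_coev_right : (contractMid Φ.toLinearMap).flip (coev Φ B) = LinearMap.id :=
  TensorProduct.ext' fun x w => by
    rw [LinearMap.flip_apply, coev, map_sum]
    simp only [contractMid_tmul, LinearEquiv.coe_coe, ← tmul_smul, ← tmul_sum, ← map_smul,
      ← map_sum, B.sum_dual_apply_smul_coord, LinearEquiv.symm_apply_apply, LinearMap.id_apply]

lemma rTensor_coev_eq_lTensor_coev (g : Y →ₗ[R] Y) (h : W →ₗ[R] W)
    (hgh : ∀ w, Φ (h w) = g.dualMap (Φ w)) :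
    g.rTensor W (coev Φ B) = h.lTensor Y (coev Φ B) := by
  have h_symm (f : Module.Dual R Y) : h (Φ.symm f) = Φ.symm (g.dualMap f) := by
    rw [Φ.eq_symm_apply, hgh, Φ.apply_symm_apply]
  calc g.rTensor W (coev Φ B)
      = ∑ j, ∑ i, B.coord i (g (B j)) • (B i ⊗ₜ Φ.symm (B.coord j)) := by
        simp only [coev, map_sum, LinearMap.rTensor_tmul, Module.Basis.coord_apply, smul_tmul']
        simp only [← sum_tmul, B.sum_repr]
    _ = ∑ i, B i ⊗ₜ Φ.symm (∑ j, B.coord i (g (B j)) • B.coord j) := by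
        rw [Finset.sum_comm]
        simp only [map_sum, map_smul, tmul_sum, tmul_smul]
    _ = h.lTensor Y (coev Φ B) := by
        simp only [coev, map_sum, LinearMap.lTensor_tmul, h_symm, LinearMap.dualMap_apply',
          ← LinearMap.comp_apply (B.coord _) g, B.sum_dual_apply_smul_coord]

end Contraction

section Corner

variable {k A e}

lemma mul_mem_Ae (a : A) {y : A} (hy : y ∈ Ae k A e) : a * y ∈ Ae k A e := by
  obtain ⟨c, rfl⟩ := hy
  exact ⟨a * c, by simp [mul_assoc]⟩

lemma mul_mem_eA {w : A} (hw : w ∈ eA k A e) (a : A) : w * a ∈ eA k A e := by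
  obtain ⟨b, rfl⟩ := hw
  exact ⟨b * a, by simp [mul_assoc]⟩

variable (k A e)

noncomputable def lmul : A →ₗ[k] Ae k A e →ₗ[k] Ae k A e :=
  LinearMap.mk₂ k (fun a y => ⟨a * y, mul_mem_Ae a y.2⟩)
    (fun a a' y => Subtype.ext (add_mul a a' y))
    (fun c a y => Subtype.ext (smul_mul_assoc c a y))
    (fun a y y' => Subtype.ext (mul_add a y y'))
    (fun c a y => Subtype.ext (mul_smul_comm c a y))

noncomputable def rmul : A →ₗ[k] eA k A e →ₗ[k] eA k A e :=
  LinearMap.mk₂ k (fun a w => ⟨w * a, mul_mem_eA w.2 a⟩)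
    (fun a a' w => Subtype.ext (mul_add (w : A) a a'))
    (fun c a w => Subtype.ext (mul_smul_comm c (w : A) a))
    (fun a w w' => Subtype.ext (add_mul (w : A) w' a))
    (fun c a w => Subtype.ext (smul_mul_assoc c (w : A) a))

noncomputable def glueMap :
    (Ae k A e ⊗[k] eA k A e) →ₗ[k] (Ae k A e ⊗[k] eA k A e) →ₗ[k]
      Ae k A e ⊗[k] (eA k A e ⊗[k] eA k A e) :=
  mulMid ((rmul k A e).flip.compl₂ (Ae k A e).subtype)

noncomputable def evalMid (Φ : eA k A e ≃ₗ[k] Module.Dual k (Ae k A e)) :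
    Ae k A e ⊗[k] (eA k A e ⊗[k] eA k A e) →ₗ[k] Ae k A e ⊗[k] eA k A e :=
  LinearMap.lTensor _ ((TensorProduct.lid k _).toLinearMap ∘ₗ
    LinearMap.rTensor _ (Φ.toLinearMap.flip ⟨e, e_mem_Ae k A e⟩))

variable {k A e} {Φ : eA k A e ≃ₗ[k] Module.Dual k (Ae k A e)}

lemma evalMid_tmul (x : Ae k A e) (w y : eA k A e) :
    evalMid k A e Φ (x ⊗ₜ (w ⊗ₜ y)) = Φ w ⟨e, e_mem_Ae k A e⟩ • (x ⊗ₜ y) := by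
  simp [evalMid, tmul_smul]

lemma apply_rmul_eq_dualMap_lmul
    (hΦ : ∀ b a c : A,
      Φ ⟨(e * b) * a, mem_eA'' k A e b a⟩ ⟨c * e, mem_Ae k A e c⟩ =
      Φ ⟨e * b, mem_eA k A e b⟩ ⟨a * (c * e), mem_Ae' k A e a c⟩)
    (a : A) (w : eA k A e) : Φ (rmul k A e a w) = (lmul k A e a).dualMap (Φ w) := by
  obtain ⟨_, b, rfl⟩ := w
  ext ⟨_, c, rfl⟩
  exact hΦ b a c

lemma evalMid_glueMap (he : IsIdempotentElem e)
    (hΦ : ∀ a w, Φ (rmul k A e a w) = (lmul k A e a).dualMap (Φ w))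
    (r s : Ae k A e ⊗[k] eA k A e) :
    evalMid k A e Φ (glueMap k A e r s) = contractMid Φ.toLinearMap r s := by
  have pairing_mul (w : eA k A e) (y : Ae k A e) :
      Φ (rmul k A e y w) ⟨e, e_mem_Ae k A e⟩ = Φ w y := by
    rw [hΦ, LinearMap.dualMap_apply]
    congr 1
    obtain ⟨_, c, rfl⟩ := y
    exact Subtype.ext (by simp [lmul, mul_assoc, he.eq])
  suffices (glueMap k A e).compr₂ (evalMid k A e Φ) = contractMid Φ.toLinearMap from
    LinearMap.congr_fun₂ this r s
  exact TensorProduct.ext' fun x w => TensorProduct.ext' fun y z => by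
    simp [glueMap, evalMid_tmul, pairing_mul]

end Corner

/-- Let `A` be a finite dimensional `k`-algebra and `e ∈ A` an idempotent such
that `eA ≅ Hom_k(Ae, k)` as right `A`-modules (the isomorphism `Φ`, right `A`-equivariance
expressed elementwise).  Then the `A`-`A`-bimodule `Ae ⊗_k eA` carries the structure of an
algebra object in the monoidal category of `A`-`A`-bimodules: using the identification
`(Ae ⊗_k eA) ⊗_A (Ae ⊗_k eA) ≅ Ae ⊗_k (eA·Ae) ⊗_k eA` (the map `glue` below), the
multiplication `m` is induced by the evaluation pairing `eA ⊗_A Ae → k`, `x ⊗ y ↦ Φ(x)(y)`,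
and the unit `A → Ae ⊗_k eA` is the bimodule map sending `1` to the dual-basis element
`Σᵢ aᵢ ⊗ Φ⁻¹(aᵢ*)`.  Associativity and unitality hold. -/
theorem statement3 (he : IsIdempotentElem e)
    (Φ : ↥(eA k A e) ≃ₗ[k] (↥(Ae k A e) →ₗ[k] k))
    -- right A-equivariance of Φ : Φ(x·a)(y) = Φ(x)(a·y)
    (hΦ : ∀ b a c : A,
      Φ ⟨(e * b) * a, mem_eA'' k A e b a⟩ ⟨c * e, mem_Ae k A e c⟩ =
      Φ ⟨e * b, mem_eA k A e b⟩ ⟨a * (c * e), mem_Ae' k A e a c⟩)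
    (ι : Type) (_ : Fintype ι) (B : Module.Basis ι k ↥(Ae k A e)) :
    ∃ (glue : (↥(Ae k A e) ⊗[k] ↥(eA k A e)) →ₗ[k]
          (↥(Ae k A e) ⊗[k] ↥(eA k A e)) →ₗ[k]
          (↥(Ae k A e) ⊗[k] (↥(eA k A e) ⊗[k] ↥(eA k A e))))
      (m : (↥(Ae k A e) ⊗[k] (↥(eA k A e) ⊗[k] ↥(eA k A e))) →ₗ[k]
          (↥(Ae k A e) ⊗[k] ↥(eA k A e)))
      (t₀ : ↥(Ae k A e) ⊗[k] ↥(eA k A e))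
      (L R : A →ₗ[k] (↥(Ae k A e) ⊗[k] ↥(eA k A e)) →ₗ[k]
          (↥(Ae k A e) ⊗[k] ↥(eA k A e))),
      -- glue realizes the identification (Ae⊗eA)⊗_A(Ae⊗eA) ≅ Ae ⊗ eAAe ⊗ eA on generators
      (∀ a b c d : A,
        glue ((⟨a * e, mem_Ae k A e a⟩ : ↥(Ae k A e)) ⊗ₜ[k]
                (⟨e * b, mem_eA k A e b⟩ : ↥(eA k A e)))
             ((⟨c * e, mem_Ae k A e c⟩ : ↥(Ae k A e)) ⊗ₜ[k]
                (⟨e * d, mem_eA k A e d⟩ : ↥(eA k A e))) =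
          (⟨a * e, mem_Ae k A e a⟩ : ↥(Ae k A e)) ⊗ₜ[k]
            ((⟨(e * b) * (c * e), mem_eAe_mid k A e b c⟩ : ↥(eA k A e)) ⊗ₜ[k]
              (⟨e * d, mem_eA k A e d⟩ : ↥(eA k A e)))) ∧
      -- the multiplication is induced by the pairing: the middle factor is
      -- evaluated against `e` (equivalently, `eb ⊗ ce ↦ Φ(eb)(ce)`)
      (∀ (x : ↥(Ae k A e)) (w : ↥(eA k A e)) (y : ↥(eA k A e)),
        m (x ⊗ₜ[k] (w ⊗ₜ[k] y)) =
          (Φ w ⟨e, e_mem_Ae k A e⟩) • (x ⊗ₜ[k] y)) ∧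
      -- the unit is the dual-basis (coevaluation) element
      (t₀ = ∑ i, (B i) ⊗ₜ[k] (Φ.symm (B.coord i))) ∧
      -- left and right A-actions on Ae ⊗ eA
      (∀ (a c : A) (y : ↥(eA k A e)),
        L a ((⟨c * e, mem_Ae k A e c⟩ : ↥(Ae k A e)) ⊗ₜ[k] y) =
          (⟨a * (c * e), mem_Ae' k A e a c⟩ : ↥(Ae k A e)) ⊗ₜ[k] y) ∧
      (∀ (a b : A) (x : ↥(Ae k A e)),
        R a (x ⊗ₜ[k] (⟨e * b, mem_eA k A e b⟩ : ↥(eA k A e))) =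
          x ⊗ₜ[k] (⟨(e * b) * a, mem_eA'' k A e b a⟩ : ↥(eA k A e))) ∧
      -- the unit A → Ae ⊗ eA, a ↦ a • t₀, is a bimodule map (centrality of t₀)
      (∀ a : A, L a t₀ = R a t₀) ∧
      -- associativity of the induced multiplication
      (∀ r s t : ↥(Ae k A e) ⊗[k] ↥(eA k A e),
        m (glue (m (glue r s)) t) = m (glue r (m (glue s t)))) ∧
      -- unitality
      (∀ t : ↥(Ae k A e) ⊗[k] ↥(eA k A e), m (glue t₀ t) = t ∧ m (glue t t₀) = t) := by
  have hΦ_dual := apply_rmul_eq_dualMap_lmul hΦ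
  refine ⟨glueMap k A e, evalMid k A e Φ, coev Φ B,
    (LinearMap.rTensorHom _).comp (lmul k A e), (LinearMap.lTensorHom _).comp (rmul k A e),
    fun a b c d => mulMid_tmul .., evalMid_tmul, rfl, fun a c y => rfl, fun a b x => rfl,
    fun a => ?_, fun r s t => ?_, fun t => ?_⟩
  · exact rTensor_coev_eq_lTensor_coev Φ B _ _ (hΦ_dual a)
  · simp only [evalMid_glueMap he hΦ_dual, contractMid_assoc]
  · simp only [evalMid_glueMap he hΦ_dual]
    exact ⟨LinearMap.congr_fun (contractMid_coev_left Φ B) t,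
      LinearMap.congr_fun (contractMid_coev_right Φ B) t⟩

end Statement3
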